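/- Under ignorability, for any measurable function q(x) with 0 < ζ₁ ≤ q(X) ≤ ζ₂ < 1 a.s. (not necessarily the true propensity score), if μ₁(x) = E[Y(1)|X=x], then E[ A·Y/q(X) − (A − q(X))/q(X) · μ₁(X) ] = E[Y(1)]. That is, the AIPW functional is unbiased for E[Y(1)] when the outcome model is correctly specified, even if the propensity model is misspecified. -/

import Mathlib

/-!
Where `q(X) > 0`, the AIPW integrand equals `μ₁(X) + q(X)⁻¹ · (Y(1) - μ₁(X)) · A`.
Given `X`, the weight `q(X)⁻¹` is known and, by ignorability, `A` is independent of `Y(1)`,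
so `E[(Y(1) - μ₁(X)) · A | X] = (E[Y(1) | X] - μ₁(X)) · E[A | X] = 0`. The correction term
therefore has mean zero, and what is left is `E[μ₁(X)] = E[E[Y(1) | X]] = E[Y(1)]`.
-/

open MeasureTheory ProbabilityTheory

theorem MeasureTheory.integral_mul_eq_zero_of_condExp_eq_zero {Ω : Type*}
    {m m₀ : MeasurableSpace Ω} {μ : Measure Ω} [IsFiniteMeasure μ] (hm : m ≤ m₀)
    {w Z : Ω → ℝ} (hw : StronglyMeasurable[m] w)
    (hwZ : Integrable (w * Z) μ) (hZ : Integrable Z μ) (hZ0 : μ[Z | m] =ᵐ[μ] 0) :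
    ∫ ω, (w * Z) ω ∂μ = 0 := by
  calc ∫ ω, (w * Z) ω ∂μ = ∫ ω, μ[w * Z | m] ω ∂μ := (integral_condExp hm).symm
    _ = ∫ ω, (w * μ[Z | m]) ω ∂μ :=
        integral_congr_ae (condExp_mul_of_stronglyMeasurable_left hw hwZ hZ)
    _ = 0 := integral_eq_zero_of_ae (hZ0.mono fun ω hω => by simp [hω])

namespace ProbabilityTheory

variable {Ω : Type*} {m' mΩ : MeasurableSpace Ω} [StandardBorelSpace Ω] {hm' : m' ≤ mΩ}
  {μ : Measure Ω} [IsFiniteMeasure μ]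

theorem CondIndepFun.ae_indepFun_condExpKernel {β β' : Type*} {mβ : MeasurableSpace β}
    {mβ' : MeasurableSpace β'} [MeasurableSpace.CountableOrCountablyGenerated Ω (β × β')]
    {f : Ω → β} {g : Ω → β'} (hfg : CondIndepFun m' hm' f g μ)
    (hf : Measurable f) (hg : Measurable g) :
    ∀ᵐ ω ∂μ, IndepFun f g (condExpKernel μ m' ω) := by
  filter_upwards [ae_of_ae_trim hm'
    ((condIndepFun_iff_map_prod_eq_prod_map_map hf hg).1 hfg)] with ω hω
  rw [indepFun_iff_map_prod_eq_prod_map_map hf.aemeasurable hg.aemeasurable]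
  rwa [Kernel.map_apply _ (hf.prodMk hg), Kernel.prod_apply, Kernel.map_apply _ hf,
    Kernel.map_apply _ hg] at hω

theorem CondIndepFun.condExp_mul {f g : Ω → ℝ} (hfg : CondIndepFun m' hm' f g μ)
    (hf : Measurable f) (hg : Measurable g) (hfi : Integrable f μ) (hgi : Integrable g μ)
    (hfgi : Integrable (f * g) μ) :
    μ[f * g | m'] =ᵐ[μ] μ[f | m'] * μ[g | m'] := by
  filter_upwards [hfg.ae_indepFun_condExpKernel hf hg,
    condExp_ae_eq_integral_condExpKernel hm' hfgi, condExp_ae_eq_integral_condExpKernel hm' hfi,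
    condExp_ae_eq_integral_condExpKernel hm' hgi] with ω hindep hfg' hf' hg'
  rw [hfg', Pi.mul_apply, hf', hg']
  exact hindep.integral_fun_mul_eq_mul_integral hf.aestronglyMeasurable hg.aestronglyMeasurable

theorem CondIndepFun.condExp_sub_condExp_mul_eq_zero {f g h : Ω → ℝ} {C : ℝ}
    (hfg : CondIndepFun m' hm' f g μ) (hf : Measurable f) (hg : Measurable g)
    (hfi : Integrable f μ) (hgC : ∀ᵐ ω ∂μ, ‖g ω‖ ≤ C)
    (hh : StronglyMeasurable[m'] h) (hfh : h =ᵐ[μ] μ[f | m']) :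
    μ[(f - h) * g | m'] =ᵐ[μ] 0 := by
  have hgi : Integrable g μ := (integrable_const C).mono' hg.aestronglyMeasurable hgC
  have hhi : Integrable h μ := integrable_condExp.congr hfh.symm
  have hfgi : Integrable (f * g) μ := hfi.mul_bdd hg.aestronglyMeasurable hgC
  have hhgi : Integrable (h * g) μ := hhi.mul_bdd hg.aestronglyMeasurable hgC
  have hpull : μ[h * g | m'] =ᵐ[μ] h * μ[g | m'] :=
    condExp_mul_of_stronglyMeasurable_left hh hhgi hgi
  filter_upwards [condExp_sub hfgi hhgi m', hfg.condExp_mul hf hg hfi hgi hfgi, hpull, hfh]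
    with ω hsub hfg' hhg' hfh'
  rw [sub_mul, hsub, Pi.sub_apply, hfg', hhg']
  simp [hfh']

end ProbabilityTheory

theorem aipw_unbiased_correct_outcome_general
    {Ω 𝓧 : Type*} [MeasurableSpace Ω] [StandardBorelSpace Ω]
    {m𝓧 : MeasurableSpace 𝓧}
    (μ : Measure Ω) [IsProbabilityMeasure μ]
    (X : Ω → 𝓧) (A Y0 Y1 : Ω → ℝ)
    (hX : Measurable X) (hA : Measurable A) (hY1 : Measurable Y1)
    (hAbin : ∀ ω, A ω = 0 ∨ A ω = 1)
    (hignor : CondIndepFun (m𝓧.comap X) (hX.comap_le)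
        (fun ω => (Y0 ω, Y1 ω)) A μ)
    (q : 𝓧 → ℝ) (hq : Measurable q)
    (ζ1 ζ2 : ℝ) (hζ1 : 0 < ζ1)
    (hqbdd : ∀ᵐ ω ∂μ, ζ1 ≤ q (X ω) ∧ q (X ω) ≤ ζ2)
    (μ1 : 𝓧 → ℝ) (hμ1meas : Measurable μ1)
    (hμ1 : (fun ω => μ1 (X ω)) =ᵐ[μ] μ[Y1 | m𝓧.comap X])
    (Y : Ω → ℝ) (hYdef : ∀ ω, Y ω = A ω * Y1 ω + (1 - A ω) * Y0 ω)
    (hint1 : Integrable Y1 μ)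
    (hint2 : Integrable
      (fun ω => A ω * Y ω / q (X ω) - (A ω - q (X ω)) / q (X ω) * μ1 (X ω)) μ)
    (hint3 : Integrable (fun ω => μ1 (X ω)) μ) :
    ∫ ω, (A ω * Y ω / q (X ω) - (A ω - q (X ω)) / q (X ω) * μ1 (X ω)) ∂μ
      = ∫ ω, Y1 ω ∂μ := by
  set μ1X : Ω → ℝ := fun ω => μ1 (X ω)
  set w : Ω → ℝ := fun ω => (q (X ω))⁻¹
  have hXm : Measurable[m𝓧.comap X] X := comap_measurable X
  have hA1 : ∀ᵐ ω ∂μ, ‖A ω‖ ≤ 1 :=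
    ae_of_all _ fun ω => by rcases hAbin ω with h | h <;> simp [h]
  have hresid : μ[(Y1 - μ1X) * A | m𝓧.comap X] =ᵐ[μ] 0 :=
    (hignor.comp measurable_snd measurable_id).condExp_sub_condExp_mul_eq_zero hY1 hA hint1 hA1
      (hμ1meas.comp hXm).stronglyMeasurable hμ1
  have hrepr : (fun ω => A ω * Y ω / q (X ω) - (A ω - q (X ω)) / q (X ω) * μ1 (X ω))
      =ᵐ[μ] w * ((Y1 - μ1X) * A) + μ1X := by
    filter_upwards [hqbdd] with ω hω
    have hq0 : q (X ω) ≠ 0 := (hζ1.trans_le hω.1).ne'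
    simp only [w, μ1X, Pi.add_apply, Pi.mul_apply, Pi.sub_apply, hYdef]
    rcases hAbin ω with h | h <;> simp only [h] <;> field_simp <;> ring
  have hweighted : Integrable (w * ((Y1 - μ1X) * A)) μ := by
    simpa using ((integrable_congr hrepr).1 hint2).sub hint3
  calc _ = ∫ ω, (w * ((Y1 - μ1X) * A)) ω ∂μ + ∫ ω, μ1X ω ∂μ := by
        rw [integral_congr_ae hrepr, integral_add' hweighted hint3]
    _ = ∫ ω, μ[Y1 | m𝓧.comap X] ω ∂μ := by
        rw [integral_mul_eq_zero_of_condExp_eq_zero hX.comap_le (w := w)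
          (hq.comp hXm).inv.stronglyMeasurable hweighted
          ((hint1.sub hint3).mul_bdd hA.aestronglyMeasurable hA1) hresid,
          zero_add, integral_congr_ae hμ1]
    _ = ∫ ω, Y1 ω ∂μ := integral_condExp hX.comap_le

/-- Double robustness in the outcome-model direction: under ignorability, for any
measurable `q` bounded in `[ζ₁,ζ₂] ⊂ (0,1)` (not necessarily the true propensity
score), if `μ₁(x) = E[Y(1)|X=x]`, then the AIPW functional is unbiased for
`E[Y(1)]`. -/
theorem aipw_unbiased_correct_outcome
    {Ω 𝓧 : Type*} [MeasurableSpace Ω] [StandardBorelSpace Ω] [Nonempty Ω]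
    {m𝓧 : MeasurableSpace 𝓧}
    (μ : Measure Ω) [IsProbabilityMeasure μ]
    (X : Ω → 𝓧) (A Y0 Y1 : Ω → ℝ)
    (hX : Measurable X) (hA : Measurable A) (hY0 : Measurable Y0) (hY1 : Measurable Y1)
    (hAbin : ∀ ω, A ω = 0 ∨ A ω = 1)
    (hignor : CondIndepFun (m𝓧.comap X) (hX.comap_le)
        (fun ω => (Y0 ω, Y1 ω)) A μ)
    (q : 𝓧 → ℝ) (hq : Measurable q)
    (ζ1 ζ2 : ℝ) (hζ1 : 0 < ζ1) (hζ12 : ζ1 ≤ ζ2) (hζ2 : ζ2 < 1)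
    (hqbdd : ∀ᵐ ω ∂μ, ζ1 ≤ q (X ω) ∧ q (X ω) ≤ ζ2)
    (μ1 : 𝓧 → ℝ) (hμ1meas : Measurable μ1)
    (hμ1 : (fun ω => μ1 (X ω)) =ᵐ[μ] μ[Y1 | m𝓧.comap X])
    (Y : Ω → ℝ) (hYdef : ∀ ω, Y ω = A ω * Y1 ω + (1 - A ω) * Y0 ω)
    (hint0 : Integrable Y0 μ) (hint1 : Integrable Y1 μ)
    (hint2 : Integrable
      (fun ω => A ω * Y ω / q (X ω) - (A ω - q (X ω)) / q (X ω) * μ1 (X ω)) μ)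
    (hint3 : Integrable (fun ω => μ1 (X ω)) μ) :
    ∫ ω, (A ω * Y ω / q (X ω) - (A ω - q (X ω)) / q (X ω) * μ1 (X ω)) ∂μ
      = ∫ ω, Y1 ω ∂μ :=
  aipw_unbiased_correct_outcome_general μ X A Y0 Y1 hX hA hY1 hAbin hignor q hq ζ1 ζ2 hζ1 hqbdd μ1
    hμ1meas hμ1 Y hYdef hint1 hint2 hint3
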